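/- arXiv:1508.07028 — 7 statements merged into one kernel-verified Lean document; each statement's English description precedes it below -/
import Mathlib

section
/- Let X be a complete metric space, Y a metric space, and f : X → Y a continuous map which is an open map and expansive: d(f(u), f(x)) ≥ α·d(u, x) for all u, x ∈ X and some α > 0. Then f has closed image; in particular if Y is connected and f(X) is nonempty and open, f is surjective, and f is a homeomorphism onto Y. -/
/-- A continuous open expansive map from a complete metric space to a connected metric
space has closed range, is surjective and is a homeomorphism onto `Y`. -/
theorem stmt8 {X Y : Type*} [MetricSpace X] [CompleteSpace X] [Nonempty X]
    [MetricSpace Y] [ConnectedSpace Y] (f : X → Y)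
    (hf : Continuous f) (hopen : IsOpenMap f)
    {α : ℝ} (hα : 0 < α)
    (hexp : ∀ u x : X, α * dist u x ≤ dist (f u) (f x)) :
    IsClosed (Set.range f) ∧ Function.Surjective f ∧ IsHomeomorph f := by
  have hinj : Function.Injective f := by
    intro a b h
    have h1 := hexp a b
    rw [h, dist_self] at h1
    have h2 : dist a b ≤ 0 := by nlinarith [dist_nonneg (x := a) (y := b)]
    exact dist_le_zero.mp h2
  have hclosed : IsClosed (Set.range f) := by
    apply IsSeqClosed.isClosed
    intro u y hu huy
    choose x hx using hu
    have hfx : f ∘ x = u := funext hx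
    have hcauchy : CauchySeq (f ∘ x) := hfx ▸ huy.cauchySeq
    have hcx : CauchySeq x := by
      rw [Metric.cauchySeq_iff] at hcauchy ⊢
      intro ε hε
      obtain ⟨N, hN⟩ := hcauchy (α * ε) (by positivity)
      refine ⟨N, fun m hm n hn => ?_⟩
      have h1 := hexp (x m) (x n)
      have h2 := hN m hm n hn
      simp only [Function.comp] at h2
      nlinarith
    obtain ⟨a, ha⟩ := cauchySeq_tendsto_of_complete hcx
    have ht : Filter.Tendsto (f ∘ x) Filter.atTop (nhds (f a)) := (hf.tendsto a).comp ha
    have : f a = y := tendsto_nhds_unique (hfx ▸ ht) huy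
    exact ⟨a, this⟩
  have hsurj : Function.Surjective f := by
    have hcl : Set.range f = ∅ ∨ Set.range f = Set.univ :=
      isClopen_iff.mp ⟨hclosed, hopen.isOpen_range⟩
    rcases hcl with h | h
    · exact absurd h (Set.range_nonempty f).ne_empty
    · exact Set.range_eq_univ.mp h
  exact ⟨hclosed, hsurj, hf, hopen, ⟨hinj, hsurj⟩⟩
end

section
/- Let X, Y be Banach spaces, X complete (automatic), and f : X → Y a C¹ map such that df(x) is a linear isomorphism for every x and ‖df(x)⁻¹‖ ≤ β for all x ∈ X and some β > 0 (Hadamard–Lévy condition with constant bound). If q : [0, ε) → X is a path with f(q(t)) = p(t) for a C¹ path p : [0,1] → Y, then q is Lipschitz with constant β·sup‖p′‖, and hence extends continuously to [0, ε]. -/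
/-!
Along the lift, `q' = df(q)⁻¹ p'` has norm at most `β M`, so the mean value inequality makes `q`
`β M`-Lipschitz. A uniformly continuous map into a complete space sends the Cauchy filters
`𝓝[s] x`, `x ∈ closure s`, to convergent ones, so `q` extends continuously to `[0, ε]`.
-/

open Topology Filter

theorem UniformContinuousOn.continuousOn_extendFrom_closure {α β : Type*} [UniformSpace α]
    [UniformSpace β] [CompleteSpace β] {g : α → β} {s : Set α} (hg : UniformContinuousOn g s) :
    ContinuousOn (extendFrom s g) (closure s) := by
  refine continuousOn_extendFrom subset_rfl fun x hx => ?_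
  have hcauchy : Cauchy (map g (𝓝[s] x)) :=
    (cauchy_nhds.mono' (mem_closure_iff_nhdsWithin_neBot.1 hx) inf_le_left).map_of_le hg
      inf_le_right
  exact CompleteSpace.complete hcauchy

theorem lipschitzOnWith_of_hasDerivAt_symm_apply {X Y : Type*} [NormedAddCommGroup X]
    [NormedSpace ℝ X] [NormedAddCommGroup Y] [NormedSpace ℝ Y] (f' : X → X ≃L[ℝ] Y) {β : ℝ}
    (hbound : ∀ x, ‖((f' x).symm : Y →L[ℝ] X)‖ ≤ β) (p' : ℝ → Y) {M : ℝ} {s : Set ℝ}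
    (hs : Convex ℝ s) (hM : ∀ t ∈ s, ‖p' t‖ ≤ M) (q : ℝ → X)
    (hq : ∀ t ∈ s, HasDerivAt q ((f' (q t)).symm (p' t)) t) :
    LipschitzOnWith (Real.toNNReal (β * M)) q s := by
  refine hs.lipschitzOnWith_of_nnnorm_hasDerivWithin_le
    (fun t ht => (hq t ht).hasDerivWithinAt) fun t ht => ?_
  rw [← norm_toNNReal]
  exact Real.toNNReal_le_toNNReal
    (((f' (q t)).symm : Y →L[ℝ] X).le_of_opNorm_le_of_le (hbound _) (hM t ht))

theorem stmt11_general {X Y : Type*} [NormedAddCommGroup X] [NormedSpace ℝ X] [CompleteSpace X]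
    [NormedAddCommGroup Y] [NormedSpace ℝ Y]
    (f' : X → X ≃L[ℝ] Y)
    {β : ℝ} (hbound : ∀ x, ‖((f' x).symm : Y →L[ℝ] X)‖ ≤ β)
    (p' : ℝ → Y)
    {M : ℝ} (hM : ∀ t ∈ Set.Icc (0:ℝ) 1, ‖p' t‖ ≤ M)
    {ε : ℝ} (hε : 0 < ε) (hε1 : ε ≤ 1)
    (q : ℝ → X)
    (hq : ∀ t ∈ Set.Ico (0:ℝ) ε, HasDerivAt q ((f' (q t)).symm (p' t)) t) :
    LipschitzOnWith (Real.toNNReal (β * M)) q (Set.Ico 0 ε) ∧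
      ∃ qbar : ℝ → X, ContinuousOn qbar (Set.Icc 0 ε) ∧
        ∀ t ∈ Set.Ico (0:ℝ) ε, qbar t = q t := by
  have hlip : LipschitzOnWith (Real.toNNReal (β * M)) q (Set.Ico 0 ε) :=
    lipschitzOnWith_of_hasDerivAt_symm_apply f' hbound p' (convex_Ico 0 ε)
      (fun t ht => hM t (Set.Ico_subset_Icc_self.trans (Set.Icc_subset_Icc_right hε1) ht)) q hq
  refine ⟨hlip, extendFrom (Set.Ico 0 ε) q, ?_, extendFrom_extends hlip.continuousOn⟩
  rw [← closure_Ico hε.ne]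
  exact hlip.uniformContinuousOn.continuousOn_extendFrom_closure

/-- Under the Hadamard–Lévy bound `‖df(x)⁻¹‖ ≤ β`, a lift `q` on `[0, ε)` of a `C¹`
path `p` with `‖p′‖ ≤ M` is Lipschitz with constant `β·M`, hence extends
continuously to `[0, ε]`. -/
theorem stmt11 {X Y : Type*} [NormedAddCommGroup X] [NormedSpace ℝ X] [CompleteSpace X]
    [NormedAddCommGroup Y] [NormedSpace ℝ Y] [CompleteSpace Y]
    (f : X → Y) (f' : X → X ≃L[ℝ] Y)
    (hf : ∀ x, HasFDerivAt f (f' x : X →L[ℝ] Y) x)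
    {β : ℝ} (hβ : 0 < β) (hbound : ∀ x, ‖((f' x).symm : Y →L[ℝ] X)‖ ≤ β)
    (p p' : ℝ → Y) (hp : ∀ t ∈ Set.Icc (0:ℝ) 1, HasDerivAt p (p' t) t)
    {M : ℝ} (hM : ∀ t ∈ Set.Icc (0:ℝ) 1, ‖p' t‖ ≤ M)
    {ε : ℝ} (hε : 0 < ε) (hε1 : ε ≤ 1)
    (q : ℝ → X)
    (hq : ∀ t ∈ Set.Ico (0:ℝ) ε, HasDerivAt q ((f' (q t)).symm (p' t)) t)
    (hlift : ∀ t ∈ Set.Ico (0:ℝ) ε, f (q t) = p t) :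
    LipschitzOnWith (Real.toNNReal (β * M)) q (Set.Ico 0 ε) ∧
      ∃ qbar : ℝ → X, ContinuousOn qbar (Set.Icc 0 ε) ∧
        ∀ t ∈ Set.Ico (0:ℝ) ε, qbar t = q t :=
  stmt11_general f' hbound p' hM hε hε1 q hq
end

section
/- Hadamard–Lévy theorem: Let X, Y be Banach spaces and f : X → Y a C¹ map such that df(x) is a linear isomorphism for all x and sup_x ‖df(x)⁻¹‖ < ∞. Then f is a global diffeomorphism (bijective with C¹ inverse) of X onto Y. -/
/-!
By the inverse function theorem `f` is a local homeomorphism whose local inverses are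
`(β + 1)`-Lipschitz. Hence every `M`-Lipschitz path in `Y` lifts, from any preimage of its
starting point, to a `(β + 1) M`-Lipschitz path in `X`: lifts are unique and uniformly
Lipschitz, so by completeness of `X` the endpoints of lifts up to times `u n ↑ T` converge to
some `x`, and a local inverse at `x` continues the lift beyond `T`. Lifting the segments from `f 0` to every `y` defines a section
`g` of `f`, which is continuous because lifts of homotopies through a separated local homeomorphism
are continuous. Then `g ∘ f` is a lift of `f` fixing a point, hence the identity as `X` is
connected, and the inverse of a `C¹` homeomorphism with invertible derivative is `C¹`.
-/

open Set Filter Function Topology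
open scoped NNReal

theorem LipschitzOnWith.congr {α β : Type*} [PseudoEMetricSpace α] [PseudoEMetricSpace β]
    {K : ℝ≥0} {s : Set α} {f g : α → β} (hf : LipschitzOnWith K f s) (h : EqOn f g s) :
    LipschitzOnWith K g s := fun x hx y hy => by
  simpa only [h hx, h hy] using hf hx hy

theorem LipschitzOnWith.Icc_union_Icc {X : Type*} [PseudoMetricSpace X] {K : ℝ≥0} {g : ℝ → X}
    {a b c : ℝ} (h₁ : LipschitzOnWith K g (Icc a b)) (h₂ : LipschitzOnWith K g (Icc b c)) :
    LipschitzOnWith K g (Icc a c) := by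
  refine LipschitzOnWith.of_dist_le_mul fun s hs t ht => ?_
  wlog hst : s ≤ t generalizing s t
  · rw [dist_comm, dist_comm s]; exact this t ht s hs (le_of_not_ge hst)
  rcases le_total t b with htb | hbt
  · exact h₁.dist_le_mul s ⟨hs.1, hst.trans htb⟩ t ⟨ht.1, htb⟩
  rcases le_total s b with hsb | hbs
  · calc dist (g s) (g t) ≤ dist (g s) (g b) + dist (g b) (g t) := dist_triangle _ _ _
      _ ≤ K * dist s b + K * dist b t :=
        add_le_add (h₁.dist_le_mul s ⟨hs.1, hsb⟩ b ⟨hs.1.trans hsb, le_rfl⟩)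
          (h₂.dist_le_mul b ⟨le_rfl, hbt.trans ht.2⟩ t ⟨hbt, ht.2⟩)
      _ = K * dist s t := by
        rw [Real.dist_eq, Real.dist_eq, Real.dist_eq, abs_of_nonpos (by linarith),
          abs_of_nonpos (by linarith), abs_of_nonpos (by linarith)]
        ring
  · exact h₂.dist_le_mul s ⟨hbs, hs.2⟩ t ⟨hbt, ht.2⟩

theorem IsSeparatedMap.leftInverse_of_rightInverse {X Y : Type*} [TopologicalSpace X]
    [TopologicalSpace Y] [PreconnectedSpace X] {f : X → Y} {g : Y → X} (sep : IsSeparatedMap f)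
    (inj : IsLocallyInjective f) (hf : Continuous f) (hg : Continuous g)
    (h : RightInverse g f) : LeftInverse g f := fun x =>
  congr_fun (sep.eq_of_comp_eq inj (hg.comp hf) continuous_id (by ext y; simp [h (f y)])
    (g (f x)) (by simp [h (f x)])) x

section Lifting

variable {X Y : Type*} [MetricSpace X] [MetricSpace Y] {K M : ℝ≥0} {f : X → Y}

theorem OpenPartialHomeomorph.exists_lift_extension {e : OpenPartialHomeomorph X Y} (hfe : f = e)
    (he : LipschitzOnWith K e.symm e.target) {c : ℝ → Y} {σ : ℝ → X} {T T' : ℝ} (hT : 0 ≤ T)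
    (hc : LipschitzOnWith M c (Icc T T')) (hce : MapsTo c (Icc T T') e.target)
    (hσ : LipschitzOnWith (K * M) σ (Icc 0 T)) (hσc : EqOn (f ∘ σ) c (Icc 0 T))
    (hσT : σ T ∈ e.source) :
    ∃ σ' : ℝ → X, σ' 0 = σ 0 ∧ LipschitzOnWith (K * M) σ' (Icc 0 T') ∧
      EqOn (f ∘ σ') c (Icc 0 T') := by
  classical
  have hjoin : σ T = e.symm (c T) := by
    rw [← hσc ⟨hT, le_rfl⟩, comp_apply, hfe, e.left_inv hσT]
  refine ⟨fun t => if t ≤ T then σ t else e.symm (c t), if_pos hT, ?_, fun t ht => ?_⟩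
  · refine (hσ.congr fun t ht => (if_pos ht.2).symm).Icc_union_Icc
      ((he.comp hc hce).congr fun t ht => ?_)
    rcases ht.1.eq_or_lt with rfl | h
    · simp [hjoin]
    · simp [not_le.2 h]
  · by_cases h : t ≤ T
    · simpa only [comp_apply, if_pos h] using hσc ⟨ht.1, h⟩
    · simp only [comp_apply, if_neg h, hfe]
      exact e.right_inv (hce ⟨(not_le.1 h).le, ht.2⟩)

theorem IsLocalHomeomorph.exists_tendsto_lift_endpoint [CompleteSpace X]
    (hf : IsLocalHomeomorph f) {L : ℝ≥0} {c : ℝ → Y} {x₀ : X} {u : ℕ → ℝ} {T : ℝ} (hu_mono : Monotone u) (hu0 : 0 ≤ u 0)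
    (hu_lim : Tendsto u atTop (𝓝 T)) {σ : ℕ → ℝ → X} (hσ0 : ∀ n, σ n 0 = x₀)
    (hσlip : ∀ n, LipschitzOnWith L (σ n) (Icc 0 (u n)))
    (hσc : ∀ n, EqOn (f ∘ σ n) c (Icc 0 (u n))) :
    ∃ x, Tendsto (fun n => σ n (u n)) atTop (𝓝 x) := by
  have hu_nonneg : ∀ n, 0 ≤ u n := fun n => hu0.trans (hu_mono n.zero_le)
  have hσ_eq : ∀ n m, n ≤ m → EqOn (σ n) (σ m) (Icc 0 (u n)) := fun n m hnm =>
    (T2Space.isSeparatedMap f).eqOn_of_comp_eqOn hf.isLocallyInjective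
      isPreconnected_Icc (hσlip n).continuousOn
      ((hσlip m).continuousOn.mono (Icc_subset_Icc_right (hu_mono hnm)))
      (fun t ht => (hσc n ht).trans (hσc m ⟨ht.1, ht.2.trans (hu_mono hnm)⟩).symm)
      (left_mem_Icc.2 (hu_nonneg n)) ((hσ0 n).trans (hσ0 m).symm)
  have hdist : ∀ n m, n ≤ m → dist (σ n (u n)) (σ m (u m)) ≤ L * (T - u n) := by
    intro n m hnm
    rw [hσ_eq n m hnm ⟨hu_nonneg n, le_rfl⟩]
    calc dist (σ m (u n)) (σ m (u m)) ≤ L * dist (u n) (u m) :=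
          (hσlip m).dist_le_mul _ ⟨hu_nonneg n, hu_mono hnm⟩ _ ⟨hu_nonneg m, le_rfl⟩
      _ ≤ L * (T - u n) := by
          gcongr
          rw [Real.dist_eq, abs_of_nonpos (by linarith [hu_mono hnm])]
          linarith [hu_mono.ge_of_tendsto hu_lim m]
  refine cauchySeq_tendsto_of_complete <|
    cauchySeq_of_le_tendsto_0 (fun N => L * (T - u N)) (fun n m N hn hm => ?_) ?_
  · rcases le_total n m with h | h
    · exact (hdist n m h).trans (by gcongr; exact hu_mono hn)
    · rw [dist_comm]; exact (hdist m n h).trans (by gcongr; exact hu_mono hm)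
  · simpa using (hu_lim.const_sub T).const_mul (L : ℝ)

def HasLipschitzLocalInverses (K : ℝ≥0) (f : X → Y) : Prop :=
  ∀ x, ∃ e : OpenPartialHomeomorph X Y, x ∈ e.source ∧ f = e ∧ LipschitzOnWith K e.symm e.target

namespace HasLipschitzLocalInverses

theorem isLocalHomeomorph (hf : HasLipschitzLocalInverses K f) : IsLocalHomeomorph f :=
  fun x => (hf x).imp fun _ he => ⟨he.1, he.2.1⟩

theorem exists_lift [CompleteSpace X] (hf : HasLipschitzLocalInverses K f) {c : ℝ → Y}
    (hc : LipschitzOnWith M c (Icc 0 1)) {x₀ : X} (hx₀ : f x₀ = c 0) :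
    ∃ σ : ℝ → X, σ 0 = x₀ ∧ LipschitzOnWith (K * M) σ (Icc 0 1) ∧ EqOn (f ∘ σ) c (Icc 0 1) := by
  set S := {T ∈ Icc (0:ℝ) 1 | ∃ σ : ℝ → X, σ 0 = x₀ ∧ LipschitzOnWith (K * M) σ (Icc 0 T) ∧
    EqOn (f ∘ σ) c (Icc 0 T)}
  have h0S : (0:ℝ) ∈ S := ⟨left_mem_Icc.2 zero_le_one, fun _ => x₀, rfl,
    (LipschitzWith.const' x₀).lipschitzOnWith, fun t ht => by simp [le_antisymm ht.2 ht.1, hx₀]⟩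
  have hS : BddAbove S := ⟨1, fun T hT => hT.1.2⟩
  obtain ⟨u, hu_mono, hu_lim, huS⟩ := exists_seq_tendsto_sSup ⟨0, h0S⟩ hS
  set T := sSup S
  have hT : T ∈ Icc (0:ℝ) 1 := ⟨le_csSup hS h0S, csSup_le ⟨0, h0S⟩ fun T hT => hT.1.2⟩
  choose σ hσ0 hσlip hσc using fun n => (huS n).2
  obtain ⟨x, hx⟩ := hf.isLocalHomeomorph.exists_tendsto_lift_endpoint hu_mono (huS 0).1.1
    hu_lim hσ0 hσlip hσc
  have hfx : f x = c T := by
    refine tendsto_nhds_unique ((hf.isLocalHomeomorph.continuous.tendsto x).comp hx) ?_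
    refine ((hc.continuousOn _ hT).tendsto.comp (tendsto_nhdsWithin_iff.2 ⟨hu_lim, ?_⟩)).congr
      fun n => (hσc n ⟨(huS n).1.1, le_rfl⟩).symm
    exact Eventually.of_forall fun n => (huS n).1
  obtain ⟨e, hxe, hfe, he⟩ := hf x
  obtain ⟨ε, hε, hcε⟩ := Metric.mem_nhdsWithin_iff.1 <|
    hc.continuousOn _ hT (e.open_target.mem_nhds (hfx ▸ hfe ▸ e.map_source hxe))
  obtain ⟨n, hn_src, hn_lt⟩ : ∃ n, σ n (u n) ∈ e.source ∧ T - ε < u n :=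
    ((hx.eventually (e.open_source.mem_nhds hxe)).and
      (hu_lim.eventually (lt_mem_nhds (by linarith)))).exists
  obtain ⟨σ', hσ'0, hσ'lip, hσ'c⟩ := e.exists_lift_extension hfe he (huS n).1.1
    (hc.mono (Icc_subset_Icc (huS n).1.1 (min_le_left 1 (T + ε / 2))))
    (fun t ht => hcε ⟨by
      rw [Metric.mem_ball, Real.dist_eq, abs_lt]
      constructor <;> linarith [ht.1, ht.2.trans (min_le_right _ _)],
      (huS n).1.1.trans ht.1, ht.2.trans (min_le_left _ _)⟩)
    (hσlip n) (hσc n) hn_src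
  have hT'1 : min 1 (T + ε / 2) = 1 := by
    refine min_eq_left (le_of_not_gt fun h => ?_)
    have := le_csSup hS ⟨⟨le_min zero_le_one (by linarith [hT.1]), min_le_left _ _⟩,
      σ', hσ'0.trans (hσ0 n), hσ'lip, hσ'c⟩
    rw [min_eq_right h.le] at this
    linarith
  rw [hT'1] at hσ'lip hσ'c
  exact ⟨σ', hσ'0.trans (hσ0 n), hσ'lip, hσ'c⟩

theorem exists_continuous_rightInverse {E : Type*} [NormedAddCommGroup E] [NormedSpace ℝ E]
    [CompleteSpace X] {f : X → E} (hf : HasLipschitzLocalInverses K f) (x₀ : X) :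
    ∃ g : E → X, Continuous g ∧ RightInverse g f := by
  let c (y : E) (t : ℝ) : E := f x₀ + t • (y - f x₀)
  have hc : ∀ y, LipschitzOnWith ‖y - f x₀‖₊ (c y) (Icc 0 1) := fun y =>
    (LipschitzWith.of_dist_le_mul fun s t => by
      rw [dist_eq_norm, coe_nnnorm, Real.dist_eq, mul_comm, ← Real.norm_eq_abs, ← norm_smul]
      exact (congrArg norm (by simp only [c]; module)).le).lipschitzOnWith
  choose σ hσ0 hσlip hσc using fun y => hf.exists_lift (hc y) (x₀ := x₀) (by simp [c])
  let H : C(unitInterval × E, E) := ⟨fun p => c p.2 p.1, by fun_prop⟩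
  have hlift : Continuous fun p : unitInterval × E => σ p.2 p.1 :=
    hf.isLocalHomeomorph.continuous_lift (T2Space.isSeparatedMap f) H
      (funext fun p => hσc p.2 p.1.2) (by simpa only [Set.Icc.coe_zero, hσ0] using continuous_const)
      fun y => (hσlip y).continuousOn.comp_continuous continuous_subtype_val Subtype.prop
  refine ⟨fun y => σ y 1, hlift.comp (Continuous.prodMk_right 1), fun y => ?_⟩
  simpa [c] using hσc y (right_mem_Icc.2 zero_le_one)

end HasLipschitzLocalInverses

end Lifting

theorem HasLipschitzLocalInverses.of_hasStrictFDerivAt {𝕜 E F : Type*} [NontriviallyNormedField 𝕜]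
    [NormedAddCommGroup E] [NormedSpace 𝕜 E] [CompleteSpace E] [NormedAddCommGroup F]
    [NormedSpace 𝕜 F] {f : E → F} {f' : E → E ≃L[𝕜] F} {K : ℝ≥0}
    (hf : ∀ x, HasStrictFDerivAt f (f' x : E →L[𝕜] F) x)
    (hK : ∀ x, ‖((f' x).symm : F →L[𝕜] E)‖₊ < K) : HasLipschitzLocalInverses K f := by
  intro x
  obtain ⟨s, hs, hlip⟩ := (hf x).to_localInverse.exists_lipschitzOnWith_of_nnnorm_lt K (hK x)
  set e := (hf x).toOpenPartialHomeomorph f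
  refine ⟨(e.symm.restrOpen (interior s) isOpen_interior).symm,
    ⟨(hf x).mem_toOpenPartialHomeomorph_source, ?_⟩, rfl,
    hlip.mono fun y hy => interior_subset hy.2⟩
  exact mem_interior_iff_mem_nhds.2 hs

theorem stmt12_general {X Y : Type*} [NormedAddCommGroup X] [NormedSpace ℝ X] [CompleteSpace X]
    [NormedAddCommGroup Y] [NormedSpace ℝ Y] [CompleteSpace Y]
    (f : X → Y) (hf : ContDiff ℝ 1 f)
    (f' : X → X ≃L[ℝ] Y) (hf' : ∀ x, HasFDerivAt f (f' x : X →L[ℝ] Y) x)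
    {β : ℝ} (hbound : ∀ x, ‖((f' x).symm : Y →L[ℝ] X)‖ ≤ β) :
    ∃ g : Y → X, ContDiff ℝ 1 g ∧ Function.LeftInverse g f ∧ Function.RightInverse g f := by
  have hloc : HasLipschitzLocalInverses (β.toNNReal + 1) f :=
    .of_hasStrictFDerivAt (fun x => hf.contDiffAt.hasStrictFDerivAt' (hf' x) one_ne_zero)
      fun x => by
        rw [← NNReal.coe_lt_coe, coe_nnnorm]
        push_cast
        linarith [hbound x, Real.le_coe_toNNReal β]
  obtain ⟨g, hg, hright⟩ := hloc.exists_continuous_rightInverse 0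
  have hleft : LeftInverse g f := (T2Space.isSeparatedMap f).leftInverse_of_rightInverse
    hloc.isLocalHomeomorph.isLocallyInjective hf.continuous hg hright
  let Φ : X ≃ₜ Y := ⟨⟨f, g, hleft, hright⟩, hf.continuous, hg⟩
  exact ⟨g, Φ.contDiff_symm hf' hf, hleft, hright⟩

/-- Hadamard–Lévy theorem: a `C¹` map between Banach spaces whose derivative is
everywhere an isomorphism with uniformly bounded inverse is a global diffeomorphism. -/
theorem stmt12 {X Y : Type*} [NormedAddCommGroup X] [NormedSpace ℝ X] [CompleteSpace X]
    [NormedAddCommGroup Y] [NormedSpace ℝ Y] [CompleteSpace Y]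
    (f : X → Y) (hf : ContDiff ℝ 1 f)
    (f' : X → X ≃L[ℝ] Y) (hf' : ∀ x, HasFDerivAt f (f' x : X →L[ℝ] Y) x)
    {β : ℝ} (hβ : 0 < β) (hbound : ∀ x, ‖((f' x).symm : Y →L[ℝ] X)‖ ≤ β) :
    ∃ g : Y → X, ContDiff ℝ 1 g ∧ Function.LeftInverse g f ∧ Function.RightInverse g f :=
  stmt12_general f hf f' hf' hbound
end

section
/- Let X, Y be Banach spaces, f : X → Y a C¹ local diffeomorphism with X complete, and x₀ ∈ X. Set η(ρ) = inf{‖df(x)⁻¹‖⁻¹ : ‖x − x₀‖ ≤ ρ} and ϱ(r) = ∫₀ʳ η(ρ) dρ. If ϱ(r) > 0 for some r > 0, then the open ball B(f(x₀), ϱ(r)) is contained in f(B(x₀, r)). -/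
/-!
Fix `y` with `‖f x₀ - y‖ < ϱ(r)`, pick `θ < 1` and a radius `ρ ≤ r` with `‖f x₀ - y‖ < θ ϱ(ρ)` and
`η(ρ) > 0`, and apply Ekeland's variational principle to `Φ x = ‖f x - y‖ + θ ϱ(‖x - x₀‖)` with
slope `ε = (1 - θ) η(ρ) / 2`. Since `Φ x̄ ≤ Φ x₀ = ‖f x₀ - y‖`, the Ekeland point `x̄` lies in the
ball of radius `ρ`. If `f x̄ ≠ y`, the local inverse of `f` at `x̄` gives points `z` with
`‖f z - y‖` smaller by almost `‖df(x̄)⁻¹‖⁻¹ ‖z - x̄‖`, while `ϱ(‖z - x₀‖)` grows by at most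
`η(‖x̄ - x₀‖) ‖z - x̄‖ ≤ ‖df(x̄)⁻¹‖⁻¹ ‖z - x̄‖`; because `θ < 1`, `Φ` then drops by more than
`ε ‖z - x̄‖`, which Ekeland's principle forbids.
-/

open Set Filter Topology MeasureTheory

namespace Ekeland

variable {α : Type*} [MetricSpace α] {φ : α → ℝ} {ε : ℝ}

def below (φ : α → ℝ) (ε : ℝ) (x : α) : Set α := {z | φ z + ε * dist z x ≤ φ x}

theorem mem_below {x z : α} : z ∈ below φ ε x ↔ φ z + ε * dist z x ≤ φ x := Iff.rfl

theorem self_mem_below (x : α) : x ∈ below φ ε x := by simp [mem_below]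

theorem le_of_mem_below (hε : 0 ≤ ε) {x z : α} (hz : z ∈ below φ ε x) : φ z ≤ φ x :=
  (le_add_of_nonneg_right (mul_nonneg hε dist_nonneg)).trans hz

theorem below_subset (hε : 0 ≤ ε) {x y : α} (hy : y ∈ below φ ε x) :
    below φ ε y ⊆ below φ ε x := fun z hz => by
  rw [mem_below] at *
  nlinarith [dist_triangle z y x]

theorem isClosed_below (hφ : LowerSemicontinuous φ) (x : α) : IsClosed (below φ ε x) :=
  (hφ.add (continuous_const.mul (continuous_id.dist continuous_const)).lowerSemicontinuous
    ).isClosed_preimage _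

theorem exists_mem_below_two_mul_le (hφ : BddBelow (range φ)) (x : α) :
    ∃ x' ∈ below φ ε x, 2 * φ x' ≤ φ x + sInf (φ '' below φ ε x) := by
  have hle : sInf (φ '' below φ ε x) ≤ φ x :=
    csInf_le (hφ.mono (image_subset_range _ _)) ⟨x, self_mem_below x, rfl⟩
  rcases hle.lt_or_eq with hlt | heq
  · obtain ⟨_, ⟨x', hx', rfl⟩, hx'_lt⟩ :=
      exists_lt_of_csInf_lt ((nonempty_of_mem (self_mem_below x)).image φ)
        (show sInf (φ '' below φ ε x) < (φ x + sInf (φ '' below φ ε x)) / 2 by linarith)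
    exact ⟨x', hx', by linarith⟩
  · exact ⟨x, self_mem_below x, by linarith⟩

theorem dist_le_of_two_mul_le (hφ : BddBelow (range φ)) (hε : 0 < ε) {x x' z : α}
    (hx' : x' ∈ below φ ε x) (h2 : 2 * φ x' ≤ φ x + sInf (φ '' below φ ε x))
    (hz : z ∈ below φ ε x') : dist z x' ≤ (φ x - φ x') / ε := by
  have hinf : sInf (φ '' below φ ε x) ≤ φ z :=
    csInf_le (hφ.mono (image_subset_range _ _)) ⟨z, below_subset hε.le hx' hz, rfl⟩
  rw [mem_below] at hz
  rw [le_div_iff₀ hε]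
  linarith

end Ekeland

open Ekeland in
theorem LowerSemicontinuous.ekeland {α : Type*} [MetricSpace α] [CompleteSpace α] {φ : α → ℝ}
    (hφ : LowerSemicontinuous φ) (hφb : BddBelow (range φ)) {ε : ℝ} (hε : 0 < ε) (x₀ : α) :
    ∃ x, φ x ≤ φ x₀ ∧ ∀ z, φ z + ε * dist z x ≤ φ x → z = x := by
  -- Each step goes halfway down to the infimum of `φ` on the current set, so that these nested
  -- closed sets shrink to a point.
  choose next hnext_mem hnext_le using exists_mem_below_two_mul_le (ε := ε) hφb
  set x : ℕ → α := fun n => next^[n] x₀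
  have hsucc (n : ℕ) : x (n + 1) = next (x n) := Function.iterate_succ_apply' _ _ _
  have hmem (n : ℕ) : ∀ m ≥ n, x m ∈ below φ ε (x n) := by
    intro m hm
    induction m, hm using Nat.le_induction with
    | base => exact self_mem_below _
    | succ m _ ih => exact below_subset hε.le ih (hsucc m ▸ hnext_mem _)
  have hanti : Antitone (φ ∘ x) := antitone_nat_of_succ_le fun n =>
    show φ (x (n + 1)) ≤ φ (x n) from le_of_mem_below hε.le (hmem n (n + 1) n.le_succ)
  set δ : ℕ → ℝ := fun n => (φ (x n) - φ (x (n + 1))) / ε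
  have hδ : Tendsto δ atTop (𝓝 0) := by
    have hL := tendsto_atTop_ciInf hanti (hφb.mono (range_comp_subset_range _ _))
    simpa using (hL.sub (hL.comp (tendsto_add_atTop_nat 1))).div_const ε
  have hclose (n : ℕ) {z : α} (hz : z ∈ below φ ε (x (n + 1))) : dist z (x (n + 1)) ≤ δ n :=
    dist_le_of_two_mul_le hφb hε (hsucc n ▸ hnext_mem _) (hsucc n ▸ hnext_le _) hz
  have hcauchy : CauchySeq fun n => x (n + 1) :=
    cauchySeq_of_le_tendsto_0' δ (fun n m hnm => by
      rw [dist_comm]; exact hclose n (hmem (n + 1) (m + 1) (by omega))) hδ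
  obtain ⟨xbar, hlim⟩ := cauchySeq_tendsto_of_complete hcauchy
  have hxbar (n : ℕ) : xbar ∈ below φ ε (x n) :=
    (isClosed_below hφ _).mem_of_tendsto hlim
      (eventually_atTop.2 ⟨n, fun m hm => hmem n (m + 1) (by omega)⟩)
  refine ⟨xbar, le_of_mem_below hε.le (hxbar 0), fun z hz => ?_⟩
  have hz_lim : Tendsto (fun n => x (n + 1)) atTop (𝓝 z) :=
    tendsto_iff_dist_tendsto_zero.2 <| squeeze_zero (fun _ => dist_nonneg)
      (fun n => (dist_comm _ _).trans_le (hclose n (below_subset hε.le (hxbar (n + 1)) hz))) hδ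
  exact tendsto_nhds_unique hz_lim hlim

section Primitive

variable {η : ℝ → ℝ}

theorem AntitoneOn.intervalIntegral_le_sub_mul {a b : ℝ} (hη : AntitoneOn η (Icc a b))
    (hab : a ≤ b) : ∫ x in a..b, η x ≤ (b - a) * η a :=
  calc ∫ x in a..b, η x ≤ ∫ _ in a..b, η a :=
        intervalIntegral.integral_mono_on hab
          (hη.mono (uIcc_of_le hab).subset).intervalIntegrable intervalIntegrable_const
          fun x hx => hη (left_mem_Icc.2 hab) hx hx.1
    _ = (b - a) * η a := by simp

theorem AntitoneOn.intervalIntegrable_of_Ici (hη : AntitoneOn η (Ici 0)) {a b : ℝ} (ha : 0 ≤ a)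
    (hb : 0 ≤ b) : IntervalIntegrable η volume a b :=
  (hη.mono fun _ hx => (le_min ha hb).trans hx.1).intervalIntegrable

theorem AntitoneOn.monotoneOn_primitive (hη : AntitoneOn η (Ici 0))
    (hη₀ : ∀ x ∈ Ici 0, 0 ≤ η x) : MonotoneOn (fun ρ => ∫ x in 0..ρ, η x) (Ici 0) :=
  fun a ha b hb hab => by
    dsimp only
    rw [← intervalIntegral.integral_add_adjacent_intervals (hη.intervalIntegrable_of_Ici le_rfl ha)
      (hη.intervalIntegrable_of_Ici ha hb)]
    exact le_add_of_nonneg_right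
      (intervalIntegral.integral_nonneg hab fun x hx => hη₀ x (le_trans ha hx.1))

theorem AntitoneOn.primitive_le_add_abs_mul (hη : AntitoneOn η (Ici 0))
    (hη₀ : ∀ x ∈ Ici 0, 0 ≤ η x) {a b : ℝ} (ha : 0 ≤ a) (hb : 0 ≤ b) :
    ∫ x in 0..b, η x ≤ (∫ x in 0..a, η x) + |b - a| * η a := by
  rcases le_total b a with hba | hab
  · exact le_add_of_le_of_nonneg (hη.monotoneOn_primitive hη₀ hb ha hba)
      (mul_nonneg (abs_nonneg _) (hη₀ a ha))
  · rw [← intervalIntegral.integral_add_adjacent_intervals (hη.intervalIntegrable_of_Ici le_rfl ha)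
      (hη.intervalIntegrable_of_Ici ha hb), abs_of_nonneg (sub_nonneg.2 hab)]
    exact add_le_add le_rfl ((hη.mono fun x hx => le_trans ha hx.1).intervalIntegral_le_sub_mul hab)

theorem AntitoneOn.lipschitzOnWith_primitive (hη : AntitoneOn η (Ici 0))
    (hη₀ : ∀ x ∈ Ici 0, 0 ≤ η x) :
    LipschitzOnWith (η 0).toNNReal (fun ρ => ∫ x in 0..ρ, η x) (Ici 0) :=
  LipschitzOnWith.of_le_add_mul' _ fun b hb a ha =>
    (hη.primitive_le_add_abs_mul hη₀ ha hb).trans <| add_le_add le_rfl <|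
      (mul_le_mul (Real.dist_eq b a).ge (hη self_mem_Ici ha ha) (hη₀ a ha) dist_nonneg).trans_eq
        (mul_comm _ _)

theorem AntitoneOn.exists_lt_mul_primitive (hη : AntitoneOn η (Ici 0))
    (hη₀ : ∀ x ∈ Ici 0, 0 ≤ η x) {r K : ℝ} (hr : 0 ≤ r) (hK : 0 ≤ K)
    (hKr : K < ∫ x in 0..r, η x) :
    ∃ θ ∈ Ico 0 1, ∃ ρ ∈ Icc 0 r, K < θ * ∫ x in 0..ρ, η x ∧ 0 < η ρ := by
  have hr₀ : 0 < ∫ x in 0..r, η x := hK.trans_lt hKr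
  obtain ⟨θ, hθK, hθ1⟩ := exists_between ((div_lt_one hr₀).2 hKr)
  have hθ0 : 0 < θ := (div_nonneg hK hr₀.le).trans_lt hθK
  obtain ⟨c, hcK, hcr⟩ := exists_between ((div_lt_iff₀' hθ0).2 ((div_lt_iff₀ hr₀).1 hθK))
  obtain ⟨ρ, ⟨hρ0, hρr⟩, hρc⟩ := intermediate_value_Icc hr
    ((hη.lipschitzOnWith_primitive hη₀).continuousOn.mono Icc_subset_Ici_self)
    ⟨by simpa using (div_nonneg hK hθ0.le).trans hcK.le, hcr.le⟩
  dsimp only at hρc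
  refine ⟨θ, ⟨hθ0.le, hθ1⟩, ρ, ⟨hρ0, hρr⟩, ?_, ?_⟩
  · rw [hρc, ← div_lt_iff₀' hθ0]
    exact hcK
  · have hstep := hη.primitive_le_add_abs_mul hη₀ hρ0 hr
    by_contra! h
    nlinarith [abs_nonneg (r - ρ), hη₀ ρ hρ0]

end Primitive

section InfOnClosedBalls

variable {X : Type*} [SeminormedAddCommGroup X]

noncomputable def infOnClosedBalls (g : X → ℝ) (x₀ : X) (ρ : ℝ) : ℝ :=
  sInf {c : ℝ | ∃ x : X, ‖x - x₀‖ ≤ ρ ∧ c = g x}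

variable {g : X → ℝ} {x₀ : X}

theorem infOnClosedBalls_nonneg (hg : ∀ x, 0 ≤ g x) (ρ : ℝ) : 0 ≤ infOnClosedBalls g x₀ ρ :=
  Real.sInf_nonneg fun _ ⟨x, _, hc⟩ => hc ▸ hg x

theorem infOnClosedBalls_le (hg : BddBelow (range g)) {x : X} {ρ : ℝ} (hx : ‖x - x₀‖ ≤ ρ) :
    infOnClosedBalls g x₀ ρ ≤ g x :=
  csInf_le (hg.mono <| by rintro _ ⟨x, -, rfl⟩; exact mem_range_self x) ⟨x, hx, rfl⟩

theorem antitoneOn_infOnClosedBalls (hg : BddBelow (range g)) :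
    AntitoneOn (infOnClosedBalls g x₀) (Ici 0) := fun a ha _ _ hab =>
  csInf_le_csInf (hg.mono <| by rintro _ ⟨x, -, rfl⟩; exact mem_range_self x)
    ⟨g x₀, x₀, by simpa using ha, rfl⟩ fun _ ⟨x, hx, hc⟩ => ⟨x, hx.trans hab, hc⟩

end InfOnClosedBalls

section LocalInverse

variable {X Y : Type*} [NormedAddCommGroup X] [NormedSpace ℝ X] [CompleteSpace X]
  [NormedAddCommGroup Y] [NormedSpace ℝ Y] {f : X → Y} {y : Y}

theorem HasStrictFDerivAt.exists_ne_norm_sub_add_mul_le {f' : X ≃L[ℝ] Y} {a : X}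
    (hf : HasStrictFDerivAt f (f' : X →L[ℝ] Y) a) (hy : f a ≠ y) {c : ℝ} (hc₀ : 0 < c)
    (hc : c < ‖(f'.symm : Y →L[ℝ] X)‖⁻¹) :
    ∃ z ≠ a, ‖f z - y‖ + c * ‖z - a‖ ≤ ‖f a - y‖ := by
  set v := y - f a
  set γ : ℝ → X := fun t => hf.localInverse f f' a (f a + t • v)
  have hγ0 : γ 0 = a := by simp [γ]
  have hline : Tendsto (fun t : ℝ => f a + t • v) (𝓝 0) (𝓝 (f a)) :=
    (continuous_const.add (continuous_id.smul continuous_const)).tendsto' _ _ (by simp)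
  have hγ : HasDerivAt γ (f'.symm v) 0 :=
    hf.to_localInverse.hasFDerivAt.comp_hasDerivAt_of_eq 0
      (by simpa using ((hasDerivAt_id (0 : ℝ)).smul_const v).const_add (f a)) (by simp)
  have hslope : ‖f'.symm v‖ < ‖v‖ / c := by
    have hN : 0 < ‖(f'.symm : Y →L[ℝ] X)‖ := inv_pos.1 (hc₀.trans hc)
    have hv : 0 < ‖v‖ := norm_pos_iff.2 (sub_ne_zero.2 hy.symm)
    calc ‖f'.symm v‖ ≤ ‖(f'.symm : Y →L[ℝ] X)‖ * ‖v‖ := (f'.symm : Y →L[ℝ] X).le_opNorm v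
      _ < c⁻¹ * ‖v‖ := by gcongr; exact (lt_inv_comm₀ hc₀ hN).1 hc
      _ = ‖v‖ / c := by ring
  have hev : ∀ᶠ t in 𝓝[>] (0 : ℝ), t ∈ Ioc 0 1 ∧ f (γ t) = f a + t • v ∧
      ‖t - 0‖⁻¹ * ‖γ t - γ 0‖ < ‖v‖ / c :=
    (show ∀ᶠ t in 𝓝[>] (0 : ℝ), t ∈ Ioc 0 1 from Ioc_mem_nhdsGT zero_lt_one).and <|
      ((hline.eventually hf.eventually_right_inverse).filter_mono nhdsWithin_le_nhds).and
        (hγ.hasDerivWithinAt.limsup_norm_slope_le hslope)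
  obtain ⟨t, ⟨ht0, ht1⟩, hft, hγt⟩ := hev.exists
  rw [hγ0, sub_zero, Real.norm_of_nonneg ht0.le, inv_mul_lt_iff₀ ht0, ← mul_div_assoc,
    lt_div_iff₀ hc₀] at hγt
  have hfz : f (γ t) - y = (1 - t) • (f a - y) := by rw [hft]; module
  refine ⟨γ t, fun h => ?_, ?_⟩
  · rw [h, left_eq_add, smul_eq_zero] at hft
    exact hft.elim ht0.ne' (sub_ne_zero.2 hy.symm)
  · rw [hfz, norm_smul, Real.norm_of_nonneg (by linarith), norm_sub_rev (f a)]
    nlinarith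

variable {η : ℝ → ℝ} {x₀ : X}

theorem HasStrictFDerivAt.exists_ne_add_primitive_le {f' : X ≃L[ℝ] Y} {x : X}
    (hf : HasStrictFDerivAt f (f' : X →L[ℝ] Y) x) (hy : f x ≠ y) (hη : AntitoneOn η (Ici 0))
    (hη₀ : ∀ ρ ∈ Ici 0, 0 ≤ η ρ) (hηx : η ‖x - x₀‖ ≤ ‖(f'.symm : Y →L[ℝ] X)‖⁻¹) {θ ε : ℝ}
    (hθ : 0 ≤ θ) (hε : 0 < ε) (hεθ : ε < (1 - θ) * ‖(f'.symm : Y →L[ℝ] X)‖⁻¹) :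
    ∃ z ≠ x, ‖f z - y‖ + θ * (∫ s in 0..‖z - x₀‖, η s) + ε * dist z x ≤
      ‖f x - y‖ + θ * ∫ s in 0..‖x - x₀‖, η s := by
  obtain ⟨z, hzx, hz⟩ := hf.exists_ne_norm_sub_add_mul_le hy
    (c := θ * ‖(f'.symm : Y →L[ℝ] X)‖⁻¹ + ε) (by positivity) (by linarith)
  have hϱ := hη.primitive_le_add_abs_mul hη₀ (norm_nonneg (x - x₀)) (norm_nonneg (z - x₀))
  have hzx' : |‖z - x₀‖ - ‖x - x₀‖| ≤ ‖z - x‖ := by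
    simpa using abs_norm_sub_norm_le (z - x₀) (x - x₀)
  refine ⟨z, hzx, ?_⟩
  rw [dist_eq_norm]
  calc ‖f z - y‖ + θ * (∫ s in 0..‖z - x₀‖, η s) + ε * ‖z - x‖
      ≤ ‖f z - y‖ + θ * ((∫ s in 0..‖x - x₀‖, η s) + ‖z - x‖ * ‖(f'.symm : Y →L[ℝ] X)‖⁻¹)
          + ε * ‖z - x‖ := by
        gcongr
        exact hϱ.trans (add_le_add le_rfl (mul_le_mul hzx' hηx (hη₀ _ (norm_nonneg _))
          (norm_nonneg _)))
    _ = ‖f z - y‖ + (θ * ‖(f'.symm : Y →L[ℝ] X)‖⁻¹ + ε) * ‖z - x‖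
          + θ * ∫ s in 0..‖x - x₀‖, η s := by ring
    _ ≤ _ := by gcongr

theorem exists_norm_sub_lt_eq_of_lt_mul_primitive {f' : X → X ≃L[ℝ] Y}
    (hf : ∀ x, HasStrictFDerivAt f (f' x : X →L[ℝ] Y) x) (hη : AntitoneOn η (Ici 0))
    (hη₀ : ∀ ρ ∈ Ici 0, 0 ≤ η ρ) (hηf : ∀ x, η ‖x - x₀‖ ≤ ‖((f' x).symm : Y →L[ℝ] X)‖⁻¹)
    {θ ρ : ℝ} (hθ : θ ∈ Ico 0 1) (hρ : 0 ≤ ρ) (hy : ‖f x₀ - y‖ < θ * ∫ s in 0..ρ, η s)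
    (hηρ : 0 < η ρ) : ∃ x, ‖x - x₀‖ < ρ ∧ f x = y := by
  set ϱ : ℝ → ℝ := fun ρ => ∫ s in 0..ρ, η s
  set Φ : X → ℝ := fun x => ‖f x - y‖ + θ * ϱ ‖x - x₀‖
  have hϱ₀ (x : X) : 0 ≤ ϱ ‖x - x₀‖ := by
    simpa [ϱ] using hη.monotoneOn_primitive hη₀ self_mem_Ici (norm_nonneg (x - x₀)) (norm_nonneg _)
  have hΦ : Continuous Φ :=
    (continuous_iff_continuousAt.2 fun x => (hf x).continuousAt).sub continuous_const |>.norm.add <|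
      continuous_const.mul <| (hη.lipschitzOnWith_primitive hη₀).continuousOn.comp_continuous
        (continuous_id.sub continuous_const).norm fun x => norm_nonneg _
  obtain ⟨x, hxΦ, hxmin⟩ := hΦ.lowerSemicontinuous.ekeland
    ⟨0, by rintro _ ⟨x, rfl⟩; exact add_nonneg (norm_nonneg _) (mul_nonneg hθ.1 (hϱ₀ x))⟩
    (ε := (1 - θ) * η ρ / 2) (by nlinarith [hθ.2]) x₀
  have hxρ : ‖x - x₀‖ < ρ := by
    by_contra! h
    have hϱρ := hη.monotoneOn_primitive hη₀ hρ (norm_nonneg _) h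
    simp only [Φ, ϱ, sub_self, norm_zero, intervalIntegral.integral_same, mul_zero,
      add_zero] at hxΦ
    nlinarith [norm_nonneg (f x - y), hθ.1]
  refine ⟨x, hxρ, by_contra fun hne => ?_⟩
  have hηx : η ρ ≤ ‖((f' x).symm : Y →L[ℝ] X)‖⁻¹ := (hη (norm_nonneg _) hρ hxρ.le).trans (hηf x)
  obtain ⟨z, hzx, hz⟩ := (hf x).exists_ne_add_primitive_le hne hη hη₀ (hηf x) hθ.1
    (ε := (1 - θ) * η ρ / 2) (by nlinarith [hθ.2]) (by nlinarith [hθ.2])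
  exact hzx (hxmin z hz)

theorem ball_primitive_subset_image_ball {f' : X → X ≃L[ℝ] Y}
    (hf : ∀ x, HasStrictFDerivAt f (f' x : X →L[ℝ] Y) x) (hη : AntitoneOn η (Ici 0))
    (hη₀ : ∀ ρ ∈ Ici 0, 0 ≤ η ρ) (hηf : ∀ x, η ‖x - x₀‖ ≤ ‖((f' x).symm : Y →L[ℝ] X)‖⁻¹)
    {r : ℝ} (hr : 0 ≤ r) : Metric.ball (f x₀) (∫ ρ in 0..r, η ρ) ⊆ f '' Metric.ball x₀ r := by
  intro y hy
  rw [Metric.mem_ball, dist_comm, dist_eq_norm] at hy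
  obtain ⟨θ, hθ, ρ, hρ, hyθ, hηρ⟩ := hη.exists_lt_mul_primitive hη₀ hr (norm_nonneg _) hy
  obtain ⟨x, hxρ, rfl⟩ := exists_norm_sub_lt_eq_of_lt_mul_primitive hf hη hη₀ hηf hθ hρ.1
    hyθ hηρ
  exact ⟨x, mem_ball_iff_norm.2 (hxρ.trans_le hρ.2), rfl⟩

end LocalInverse

theorem stmt14_general {X Y : Type*} [NormedAddCommGroup X] [NormedSpace ℝ X] [CompleteSpace X]
    [NormedAddCommGroup Y] [NormedSpace ℝ Y]
    (f : X → Y) (hf : ContDiff ℝ 1 f)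
    (f' : X → X ≃L[ℝ] Y) (hf' : ∀ x, HasFDerivAt f (f' x : X →L[ℝ] Y) x)
    (x₀ : X) {r : ℝ} (hr : 0 < r)
    (η : ℝ → ℝ)
    (hη : ∀ ρ : ℝ, η ρ =
      sInf {c : ℝ | ∃ x : X, ‖x - x₀‖ ≤ ρ ∧ c = ‖((f' x).symm : Y →L[ℝ] X)‖⁻¹}) :
    Metric.ball (f x₀) (∫ ρ in (0:ℝ)..r, η ρ) ⊆ f '' Metric.ball x₀ r := by
  have hstrict (x : X) : HasStrictFDerivAt f (f' x : X →L[ℝ] Y) x := by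
    simpa only [(hf' x).fderiv] using (hf.contDiffAt (x := x)).hasStrictFDerivAt one_ne_zero
  set g : X → ℝ := fun x => ‖((f' x).symm : Y →L[ℝ] X)‖⁻¹
  have hg₀ (x : X) : 0 ≤ g x := by positivity
  have hgb : BddBelow (range g) := ⟨0, by rintro _ ⟨x, rfl⟩; exact hg₀ x⟩
  obtain rfl : η = infOnClosedBalls g x₀ := funext hη
  exact ball_primitive_subset_image_ball hstrict (antitoneOn_infOnClosedBalls hgb)
    (fun ρ _ => infOnClosedBalls_nonneg hg₀ ρ) (fun x => infOnClosedBalls_le hgb le_rfl) hr.le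

/-- Quantitative Hadamard-type estimate: if `ϱ(r) = ∫₀ʳ inf{‖df(x)⁻¹‖⁻¹ : ‖x−x₀‖ ≤ ρ} dρ`
is positive then `B(f(x₀), ϱ(r)) ⊆ f(B(x₀, r))`. -/
theorem stmt14 {X Y : Type*} [NormedAddCommGroup X] [NormedSpace ℝ X] [CompleteSpace X]
    [NormedAddCommGroup Y] [NormedSpace ℝ Y] [CompleteSpace Y]
    (f : X → Y) (hf : ContDiff ℝ 1 f)
    (f' : X → X ≃L[ℝ] Y) (hf' : ∀ x, HasFDerivAt f (f' x : X →L[ℝ] Y) x)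
    (x₀ : X) {r : ℝ} (hr : 0 < r)
    (η : ℝ → ℝ)
    (hη : ∀ ρ : ℝ, η ρ =
      sInf {c : ℝ | ∃ x : X, ‖x - x₀‖ ≤ ρ ∧ c = ‖((f' x).symm : Y →L[ℝ] X)‖⁻¹})
    (hϱ : 0 < ∫ ρ in (0:ℝ)..r, η ρ) :
    Metric.ball (f x₀) (∫ ρ in (0:ℝ)..r, η ρ) ⊆ f '' Metric.ball x₀ r :=
  stmt14_general f hf f' hf' x₀ hr η hη
end

section
/- Let X be a Hilbert space, Y a Hilbert space, and f : X → Y a C¹ map. For y ∈ Y define F_y(x) = ½‖f(x) − y‖². If f satisfies the Katriel condition — for every ϱ > 0, inf{Sur df(x) : ‖f(x) − y₀‖ < ϱ} > 0 for some fixed y₀ — then there are no Palais–Smale sequences for F_y at any level c > 0: there is no sequence (xₙ) with F_y(xₙ) → c > 0 and ‖∇F_y(xₙ)‖ → 0. -/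
/-- Under the Katriel condition, `F_y(x) = ½‖f(x) − y‖²` admits no Palais–Smale
sequence at any positive level. -/
theorem stmt15 {X Y : Type*} [NormedAddCommGroup X] [InnerProductSpace ℝ X]
    [CompleteSpace X] [NormedAddCommGroup Y] [InnerProductSpace ℝ Y] [CompleteSpace Y]
    (f : X → Y) (f' : X → X →L[ℝ] Y) (hf : ∀ x, HasFDerivAt f (f' x) x)
    (y₀ : Y)
    (hkat : ∀ ϱ > (0 : ℝ), 0 < sInf {c : ℝ | ∃ x : X, ‖f x - y₀‖ < ϱ ∧
      c = sInf {a : ℝ | ∃ v : Y, ‖v‖ = 1 ∧ a = ‖ContinuousLinearMap.adjoint (f' x) v‖}}) :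
    ∀ (y : Y) (c : ℝ), 0 < c →
      ¬ ∃ x : ℕ → X,
        Filter.Tendsto (fun n => (1 / 2 : ℝ) * ‖f (x n) - y‖ ^ 2)
          Filter.atTop (nhds c) ∧
        Filter.Tendsto (fun n => ‖ContinuousLinearMap.adjoint (f' (x n)) (f (x n) - y)‖)
          Filter.atTop (nhds 0) := by
  intro y c hc
  rintro ⟨x, hF, hG⟩
  set ϱ : ℝ := Real.sqrt (2 * c + 1) + ‖y - y₀‖ + 1 with hϱ
  have hϱpos : 0 < ϱ := by positivity
  have hm := hkat ϱ hϱpos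
  set m := sInf {c : ℝ | ∃ x : X, ‖f x - y₀‖ < ϱ ∧
      c = sInf {a : ℝ | ∃ v : Y, ‖v‖ = 1 ∧ a = ‖ContinuousLinearMap.adjoint (f' x) v‖}}
    with hmdef
  -- ‖f (x n) − y‖² → 2c
  have hsq : Filter.Tendsto (fun n => ‖f (x n) - y‖ ^ 2) Filter.atTop (nhds (2 * c)) := by
    have h2 := hF.const_mul (2 : ℝ)
    have : (fun n => (2 : ℝ) * ((1 / 2 : ℝ) * ‖f (x n) - y‖ ^ 2))
        = fun n => ‖f (x n) - y‖ ^ 2 := by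
      funext n; ring
    rwa [this] at h2
  have hev1 : ∀ᶠ n in Filter.atTop, ‖f (x n) - y‖ ^ 2 < 2 * c + 1 :=
    hsq.eventually_lt_const (by linarith)
  have hev2 : ∀ᶠ n in Filter.atTop, c < ‖f (x n) - y‖ ^ 2 :=
    hsq.eventually_const_lt (by linarith)
  have hev3 : ∀ᶠ n in Filter.atTop,
      ‖ContinuousLinearMap.adjoint (f' (x n)) (f (x n) - y)‖ < m * Real.sqrt c :=
    hG.eventually_lt_const (mul_pos hm (Real.sqrt_pos.mpr hc))
  obtain ⟨n, h1, h23⟩ := (hev1.and (hev2.and hev3)).exists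
  obtain ⟨h2, h3⟩ := h23
  set u : Y := f (x n) - y with hu
  have hun : Real.sqrt c < ‖u‖ := by
    have := Real.sqrt_lt_sqrt (le_of_lt hc) h2
    rwa [Real.sqrt_sq (norm_nonneg u)] at this
  have hune : u ≠ 0 := by
    intro h
    rw [h, norm_zero] at hun
    exact absurd hun (not_lt.mpr (Real.sqrt_nonneg c))
  have hupos : 0 < ‖u‖ := norm_pos_iff.mpr hune
  -- the point x n is in the Katriel region
  have hclose : ‖f (x n) - y₀‖ < ϱ := by
    have hub : ‖u‖ < Real.sqrt (2 * c + 1) := by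
      rw [show (‖u‖ : ℝ) = Real.sqrt (‖u‖ ^ 2) by rw [Real.sqrt_sq (norm_nonneg u)]]
      exact Real.sqrt_lt_sqrt (by positivity) h1
    calc ‖f (x n) - y₀‖ = ‖u + (y - y₀)‖ := by rw [hu, sub_add_sub_cancel]
      _ ≤ ‖u‖ + ‖y - y₀‖ := norm_add_le _ _
      _ < ϱ := by rw [hϱ]; linarith
  -- the unit vector
  set v : Y := ‖u‖⁻¹ • u with hv
  have hvn : ‖v‖ = 1 := by
    rw [hv, norm_smul, norm_inv, norm_norm, inv_mul_cancel₀ (ne_of_gt hupos)]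
  set S : Set ℝ := {a : ℝ | ∃ w : Y, ‖w‖ = 1 ∧ a = ‖ContinuousLinearMap.adjoint (f' (x n)) w‖}
    with hS
  have hSur_le : sInf S ≤ ‖ContinuousLinearMap.adjoint (f' (x n)) v‖ := by
    apply csInf_le
    · exact ⟨0, fun a ⟨w, _, haw⟩ => haw ▸ norm_nonneg _⟩
    · exact ⟨v, hvn, rfl⟩
  have hm_le : m ≤ sInf S := by
    rw [hmdef]
    apply csInf_le
    · refine ⟨0, fun a ⟨z, _, haz⟩ => ?_⟩
      rw [haz]
      exact Real.sInf_nonneg (fun b ⟨w, _, hbw⟩ => hbw ▸ norm_nonneg _)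
    · exact ⟨x n, hclose, rfl⟩
  -- ‖adj u‖ = ‖u‖ * ‖adj v‖
  have hadj : ‖ContinuousLinearMap.adjoint (f' (x n)) u‖
      = ‖u‖ * ‖ContinuousLinearMap.adjoint (f' (x n)) v‖ := by
    have : u = ‖u‖ • v := by
      rw [hv, smul_smul, mul_inv_cancel₀ (ne_of_gt hupos), one_smul]
    conv_lhs => rw [this]
    rw [map_smul, norm_smul, Real.norm_eq_abs, abs_of_pos hupos]
  have hlow : m * Real.sqrt c < ‖ContinuousLinearMap.adjoint (f' (x n)) u‖ := by
    rw [hadj]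
    calc m * Real.sqrt c < m * ‖u‖ := by
          exact mul_lt_mul_of_pos_left hun hm
      _ ≤ ‖u‖ * ‖ContinuousLinearMap.adjoint (f' (x n)) v‖ := by
          rw [mul_comm]
          exact mul_le_mul_of_nonneg_left (le_trans hm_le hSur_le) (le_of_lt hupos)
  exact absurd h3 (not_lt.mpr (le_of_lt hlow))
end

section
/- Let F : X → ℝ be a C¹ functional on a Hilbert space which is bounded below and satisfies the Palais–Smale condition. Then F is coercive: F(x) → ∞ as ‖x‖ → ∞. -/
/-!
Suppose `F ≤ M` at points of arbitrarily large norm. Ekeland's variational principle with slope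
`ε` moves such a point `u` to a point `v` with `‖∇F v‖ ≤ ε`, `F v ≤ F u` and
`‖u - v‖ ≤ (M - inf F) / ε`. Taking `ε = 1/(n+1)` and `‖u‖` large enough gives a Palais–Smale
sequence with `‖v n‖ → ∞`, which cannot have a convergent subsequence.
-/

open Filter Topology

lemma exists_mem_forall_le_add {Y : Type*} {F : Y → ℝ} {s : Set Y} (hs : s.Nonempty)
    (hbdd : BddBelow (F '' s)) {ε : ℝ} (hε : 0 < ε) : ∃ w ∈ s, ∀ z ∈ s, F w ≤ F z + ε := by
  obtain ⟨_, ⟨w, hws, rfl⟩, hw⟩ := Real.lt_sInf_add_pos (hs.image F) hε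
  exact ⟨w, hws, fun z hz => hw.le.trans (by linarith [csInf_le hbdd ⟨z, hz, rfl⟩])⟩

section Ekeland

variable {Y : Type*} [MetricSpace Y] {F : Y → ℝ} {k : ℝ}

def ekelandSet (F : Y → ℝ) (k : ℝ) (v : Y) : Set Y := {w | F w + k * dist w v ≤ F v}

lemma mem_ekelandSet {v w : Y} : w ∈ ekelandSet F k v ↔ F w + k * dist w v ≤ F v := Iff.rfl

lemma self_mem_ekelandSet (v : Y) : v ∈ ekelandSet F k v := by
  simp [mem_ekelandSet]

lemma le_of_mem_ekelandSet (hk : 0 ≤ k) {v w : Y} (hw : w ∈ ekelandSet F k v) : F w ≤ F v := by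
  rw [mem_ekelandSet] at hw
  nlinarith [dist_nonneg (x := w) (y := v)]

lemma ekelandSet_subset (hk : 0 ≤ k) {v w : Y} (hw : w ∈ ekelandSet F k v) :
    ekelandSet F k w ⊆ ekelandSet F k v := by
  intro z hz
  rw [mem_ekelandSet] at hw hz ⊢
  nlinarith [dist_triangle z w v]

lemma isClosed_ekelandSet (hF : LowerSemicontinuous F) (v : Y) : IsClosed (ekelandSet F k v) :=
  (hF.add (continuous_const.mul (continuous_id.dist continuous_const)).lowerSemicontinuous)
    |>.isClosed_preimage (F v)

lemma cauchySeq_of_mem_ekelandSet (hbdd : BddBelow (Set.range F)) (hk : 0 < k) {x : ℕ → Y}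
    (hx : ∀ n, x (n + 1) ∈ ekelandSet F k (x n)) : CauchySeq x := by
  obtain ⟨m, hm⟩ := hbdd
  have hdist : ∀ n, dist (x n) (x (n + 1)) ≤ (F (x n) - F (x (n + 1))) / k := fun n => by
    rw [le_div_iff₀ hk, dist_comm]
    linarith [mem_ekelandSet.1 (hx n)]
  refine cauchySeq_of_dist_le_of_summable _ hdist (summable_of_sum_range_le
    (fun n => dist_nonneg.trans (hdist n)) (c := (F (x 0) - m) / k) fun n => ?_)
  rw [← Finset.sum_div, Finset.sum_range_sub' (fun i => F (x i))]
  gcongr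
  linarith [hm (Set.mem_range_self (x n))]

/-- Ekeland's variational principle (weak form). -/
theorem exists_mem_ekelandSet_forall_le [CompleteSpace Y] (hF : LowerSemicontinuous F)
    (hbdd : BddBelow (Set.range F)) (hk : 0 < k) (u : Y) :
    ∃ v ∈ ekelandSet F k u, ∀ w, F v ≤ F w + k * dist v w := by
  have hstep (n : ℕ) (v : Y) : ∃ w ∈ ekelandSet F k v,
      ∀ z ∈ ekelandSet F k v, F w ≤ F z + 1 / (n + 1) :=
    exists_mem_forall_le_add ⟨v, self_mem_ekelandSet v⟩
      (hbdd.mono (Set.image_subset_range _ _)) Nat.one_div_pos_of_nat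
  choose next hnext_mem hnext_le using hstep
  let x : ℕ → Y := fun n => Nat.rec u next n
  have hx_succ (n : ℕ) : x (n + 1) ∈ ekelandSet F k (x n) := hnext_mem n (x n)
  have hanti : Antitone fun n => ekelandSet F k (x n) :=
    antitone_nat_of_succ_le fun n => ekelandSet_subset hk.le (hx_succ n)
  obtain ⟨v, hv⟩ := cauchySeq_tendsto_of_complete (cauchySeq_of_mem_ekelandSet hbdd hk hx_succ)
  have hv_mem (n : ℕ) : v ∈ ekelandSet F k (x n) :=
    (isClosed_ekelandSet hF _).mem_of_tendsto hv <|
      (eventually_ge_atTop n).mono fun m hm => hanti hm (self_mem_ekelandSet _)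
  refine ⟨v, hv_mem 0, fun w => ?_⟩
  by_contra! hw
  have hw_mem : w ∈ ekelandSet F k v := by
    rw [mem_ekelandSet, dist_comm]
    exact hw.le
  -- `w` lies in every `ekelandSet F k (x n)`, on which `x (n + 1)` is `1/(n+1)`-minimal.
  have hvw : F v ≤ F w := le_of_forall_pos_lt_add fun ε hε => by
    obtain ⟨n, hn⟩ := exists_nat_one_div_lt hε
    calc F v ≤ F (x (n + 1)) := le_of_mem_ekelandSet hk.le (hv_mem (n + 1))
      _ ≤ F w + 1 / (n + 1) := hnext_le n (x n) w (ekelandSet_subset hk.le (hv_mem n) hw_mem)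
      _ < F w + ε := by linarith
  nlinarith [dist_nonneg (x := v) (y := w)]

end Ekeland

section Calculus

variable {E : Type*} [NormedAddCommGroup E] [NormedSpace ℝ E] {F : E → ℝ}

lemma norm_fderiv_le_of_forall_le_add {v : E} {k : ℝ} (hF : DifferentiableAt ℝ F v)
    (hk : 0 ≤ k) (h : ∀ w, F v ≤ F w + k * dist v w) : ‖fderiv ℝ F v‖ ≤ k := by
  have hdir (u : E) : -(k * ‖u‖) ≤ fderiv ℝ F v u := by
    refine ge_of_tendsto (hF.hasFDerivAt.lim_real u) ?_
    filter_upwards [eventually_gt_atTop 0] with c hc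
    have hu := h (v + c⁻¹ • u)
    rw [dist_self_add_right, norm_smul, Real.norm_of_nonneg (inv_nonneg.2 hc.le)] at hu
    calc -(k * ‖u‖) = c * -(k * (c⁻¹ * ‖u‖)) := by field_simp
      _ ≤ c • (F (v + c⁻¹ • u) - F v) := by
        rw [smul_eq_mul]
        gcongr
        linarith
  refine ContinuousLinearMap.opNorm_le_bound _ hk fun u => abs_le.2 ⟨hdir u, ?_⟩
  have := hdir (-u)
  rw [map_neg, norm_neg] at this
  linarith

lemma exists_norm_fderiv_le [CompleteSpace E] (hF : Differentiable ℝ F)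
    (hbdd : BddBelow (Set.range F)) {ε : ℝ} (hε : 0 < ε) (u : E) :
    ∃ v, ε * ‖u - v‖ ≤ F u - F v ∧ ‖fderiv ℝ F v‖ ≤ ε := by
  obtain ⟨v, hv_mem, hv_min⟩ :=
    exists_mem_ekelandSet_forall_le hF.continuous.lowerSemicontinuous hbdd hε u
  refine ⟨v, ?_, norm_fderiv_le_of_forall_le_add (hF v) hε.le hv_min⟩
  rw [mem_ekelandSet, dist_comm, dist_eq_norm] at hv_mem
  linarith

lemma exists_tendsto_norm_fderiv_of_frequently_le [CompleteSpace E] (hF : Differentiable ℝ F)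
    (hbdd : BddBelow (Set.range F)) {M : ℝ} (hM : ∀ R : ℝ, ∃ x : E, R < ‖x‖ ∧ F x ≤ M) :
    ∃ v : ℕ → E, Tendsto (fun n => ‖v n‖) atTop atTop ∧ (∀ n, F (v n) ≤ M) ∧
      Tendsto (fun n => ‖fderiv ℝ F (v n)‖) atTop (𝓝 0) := by
  obtain ⟨m, hm⟩ := hbdd
  have hpoint (n : ℕ) : ∃ v, (n : ℝ) ≤ ‖v‖ ∧ F v ≤ M ∧ ‖fderiv ℝ F v‖ ≤ 1 / (n + 1) := by
    have hε : (0 : ℝ) < 1 / (n + 1) := Nat.one_div_pos_of_nat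
    obtain ⟨u, hu_norm, hu_le⟩ := hM (n + (M - m) / (1 / (n + 1)))
    obtain ⟨v, hv_dist, hv_grad⟩ := exists_norm_fderiv_le hF ⟨m, hm⟩ hε u
    have hmv : m ≤ F v := hm (Set.mem_range_self v)
    have huv : ‖u - v‖ ≤ (M - m) / (1 / (n + 1)) := by
      rw [le_div_iff₀ hε]
      linarith
    refine ⟨v, ?_, by nlinarith [norm_nonneg (u - v)], hv_grad⟩
    linarith [norm_sub_norm_le u v]
  choose v hv_norm hv_le hv_grad using hpoint
  refine ⟨v, tendsto_atTop_mono hv_norm tendsto_natCast_atTop_atTop, hv_le, ?_⟩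
  exact squeeze_zero (fun n => norm_nonneg _) hv_grad tendsto_one_div_add_atTop_nhds_zero_nat

end Calculus

/-- A `C¹` functional on a Hilbert space which is bounded below and satisfies the
Palais–Smale condition is coercive. -/
theorem stmt17 {X : Type*} [NormedAddCommGroup X] [InnerProductSpace ℝ X]
    [CompleteSpace X] (F : X → ℝ) (hF : ContDiff ℝ 1 F)
    (hbdd : BddBelow (Set.range F))
    (hPS : ∀ x : ℕ → X, (∃ C : ℝ, ∀ n, |F (x n)| ≤ C) →
      Filter.Tendsto (fun n => ‖gradient F (x n)‖) Filter.atTop (nhds 0) →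
      ∃ φ : ℕ → ℕ, StrictMono φ ∧ ∃ l : X,
        Filter.Tendsto (x ∘ φ) Filter.atTop (nhds l)) :
    ∀ M : ℝ, ∃ R : ℝ, ∀ x : X, R < ‖x‖ → M < F x := by
  by_contra! hcoercive
  obtain ⟨M, hM⟩ := hcoercive
  obtain ⟨v, hv_norm, hv_le, hv_grad⟩ :=
    exists_tendsto_norm_fderiv_of_frequently_le (hF.differentiable one_ne_zero) hbdd hM
  obtain ⟨m, hm⟩ := hbdd
  have hv_bdd : ∃ C : ℝ, ∀ n, |F (v n)| ≤ C := ⟨|m| + |M|, fun n => abs_le.2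
    ⟨by linarith [hm (Set.mem_range_self (v n)), neg_abs_le m, abs_nonneg M],
     by linarith [hv_le n, le_abs_self M, abs_nonneg m]⟩⟩
  have hv_gradient : Tendsto (fun n => ‖gradient F (v n)‖) atTop (𝓝 0) := by
    simpa only [← toDual_gradient, LinearIsometryEquiv.norm_map] using hv_grad
  obtain ⟨φ, hφ, l, hl⟩ := hPS v hv_bdd hv_gradient
  exact not_tendsto_atTop_of_tendsto_nhds hl.norm (hv_norm.comp hφ.tendsto_atTop)
end

section
/- Let f : X → Y be a map between metric spaces, X complete and a length space, such that f is a local isometry in the sense that every point x has a neighborhood on which f is an isometry onto an open subset of Y. If p : [0,1] → Y is a rectifiable path and q : [0, ε) → X is a continuous lift of p (f∘q = p on [0,ε)), then length(q|[0,t]) ≤ length(p|[0,t]) for all t < ε, and q extends continuously to [0, ε]. -/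
open Set Topology Function

/-! Along the lift `q`, the local isometry `f` turns short steps of `q` into equally long
steps of `p`; by compactness of `[a, b] ⊆ [0, ε)` a uniform scale `δ` works, and
chaining steps of length `< δ` gives `edist (q a) (q b) ≤ eVariationOn p [a, b]`. Summing over a
subdivision bounds the variation of `q` by that of `p`. Hence `q` has bounded variation on
`[0, ε)`, so it has a left limit at `ε` in the complete space `X`, which extends it continuously. -/

section Variation

variable {E F : Type*} [PseudoEMetricSpace E] [PseudoEMetricSpace F]

lemma eVariationOn_le_of_edist_le_eVariationOn {α : Type*} [LinearOrder α] {f : α → E}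
    {g : α → F} {s : Set α}
    (h : ∀ a ∈ s, ∀ b ∈ s, a ≤ b → edist (g a) (g b) ≤ eVariationOn f (s ∩ Icc a b)) :
    eVariationOn g s ≤ eVariationOn f s := by
  refine iSup_le fun ⟨n, u, hu, us⟩ => ?_
  calc ∑ i ∈ Finset.range n, edist (g (u (i + 1))) (g (u i))
      ≤ ∑ i ∈ Finset.range n, eVariationOn f (s ∩ Icc (u i) (u (i + 1))) :=
        Finset.sum_le_sum fun i _ => by
          rw [edist_comm]
          exact h _ (us i) _ (us (i + 1)) (hu i.le_succ)
    _ = eVariationOn f (s ∩ Icc (u 0) (u n)) := eVariationOn.sum f hu fun i _ _ => us i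
    _ ≤ eVariationOn f s := eVariationOn.mono f inter_subset_left

lemma eVariationOn_Icc_add_Icc (f : ℝ → E) {a b c : ℝ} (hab : a ≤ b) (hbc : b ≤ c) :
    eVariationOn f (Icc a b) + eVariationOn f (Icc b c) = eVariationOn f (Icc a c) := by
  simpa only [univ_inter] using eVariationOn.Icc_add_Icc f hab hbc (mem_univ b)

lemma edist_le_eVariationOn_of_edist_le_of_dist_lt {f : ℝ → E} {g : ℝ → F} {a b δ : ℝ}
    (hδ : 0 < δ) (hab : a ≤ b)
    (h : ∀ u ∈ Icc a b, ∀ v ∈ Icc a b, dist u v < δ → edist (g u) (g v) ≤ edist (f u) (f v)) :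
    edist (g a) (g b) ≤ eVariationOn f (Icc a b) := by
  suffices H : ∀ n : ℕ, ∀ c ∈ Icc a b, c - a < n * (δ / 2) →
      edist (g a) (g c) ≤ eVariationOn f (Icc a c) by
    obtain ⟨n, hn⟩ := exists_nat_gt ((b - a) / (δ / 2))
    exact H n b ⟨hab, le_rfl⟩ ((div_lt_iff₀ (by positivity)).1 hn)
  intro n
  induction n with
  | zero =>
    intro c hc hca
    simp only [Nat.cast_zero, zero_mul] at hca
    linarith [hc.1]
  | succ n ih =>
    intro c hc hca
    rcases lt_or_ge (c - a) δ with hshort | hlong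
    · refine (h a ⟨le_rfl, hab⟩ c hc ?_).trans
        (eVariationOn.edist_le f ⟨le_rfl, hc.1⟩ ⟨hc.1, le_rfl⟩)
      rw [Real.dist_eq, abs_sub_comm, abs_of_nonneg (sub_nonneg.2 hc.1)]
      exact hshort
    · set d := c - δ / 2 with hd_def
      have had : a ≤ d := by linarith
      have hdc : d ≤ c := by linarith
      have hd : d ∈ Icc a b := ⟨had, hdc.trans hc.2⟩
      have hstep : dist d c < δ := by
        rw [Real.dist_eq, abs_of_neg (by linarith)]
        linarith
      calc edist (g a) (g c) ≤ edist (g a) (g d) + edist (g d) (g c) := edist_triangle _ _ _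
        _ ≤ eVariationOn f (Icc a d) + eVariationOn f (Icc d c) := by
          gcongr
          · exact ih d hd (by push_cast at hca; linarith)
          · exact (h d hd c hc hstep).trans
              (eVariationOn.edist_le f ⟨le_rfl, hdc⟩ ⟨hdc, le_rfl⟩)
        _ = eVariationOn f (Icc a c) := eVariationOn_Icc_add_Icc f had hdc

end Variation

section LocallyIsometric

variable {X Y : Type*} [PseudoMetricSpace X] [PseudoMetricSpace Y]

def LocallyIsometric (f : X → Y) : Prop :=
  ∀ x, ∃ U ∈ 𝓝 x, ∀ u ∈ U, ∀ w ∈ U, dist (f u) (f w) = dist u w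

lemma LocallyIsometric.exists_pos_dist_comp_eq {f : X → Y} (hf : LocallyIsometric f)
    {T : Type*} [PseudoMetricSpace T] {q : T → X} {K : Set T} (hK : IsCompact K)
    (hq : ContinuousOn q K) :
    ∃ δ > 0, ∀ u ∈ K, ∀ v ∈ K, dist u v < δ → dist (f (q u)) (f (q v)) = dist (q u) (q v) := by
  choose U hU hUiso using hf
  obtain ⟨V, hV, hleb⟩ := lebesgue_number_lemma_nhdsWithin
    (U := fun t => q ⁻¹' U (q t)) hK fun t ht => hq t ht (hU (q t))
  obtain ⟨δ, hδ, hδV⟩ := Metric.mem_uniformity_dist.1 hV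
  refine ⟨δ, hδ, fun u hu v hv huv => ?_⟩
  obtain ⟨t, ht⟩ := hleb u hu
  exact hUiso (q t) (q u) (ht ⟨hδV (by rwa [dist_self]), hu⟩) (q v) (ht ⟨hδV huv, hv⟩)

lemma LocallyIsometric.edist_lift_le_eVariationOn {f : X → Y} (hf : LocallyIsometric f)
    {p : ℝ → Y} {q : ℝ → X} {a b : ℝ} (hab : a ≤ b) (hq : ContinuousOn q (Icc a b))
    (hlift : ∀ t ∈ Icc a b, f (q t) = p t) :
    edist (q a) (q b) ≤ eVariationOn p (Icc a b) := by
  obtain ⟨δ, hδ, hiso⟩ := hf.exists_pos_dist_comp_eq isCompact_Icc hq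
  refine edist_le_eVariationOn_of_edist_le_of_dist_lt hδ hab fun u hu v hv huv => ?_
  rw [edist_dist, edist_dist, ← hiso u hu v hv huv, hlift u hu, hlift v hv]

lemma LocallyIsometric.eVariationOn_lift_le {f : X → Y} (hf : LocallyIsometric f)
    {p : ℝ → Y} {q : ℝ → X} {s : Set ℝ} [s.OrdConnected] (hq : ContinuousOn q s)
    (hlift : ∀ t ∈ s, f (q t) = p t) :
    eVariationOn q s ≤ eVariationOn p s := by
  refine eVariationOn_le_of_edist_le_eVariationOn fun a ha b hb hab => ?_
  have hsub : Icc a b ⊆ s := s.Icc_subset ha hb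
  rw [inter_eq_right.2 hsub]
  exact hf.edist_lift_le_eVariationOn hab (hq.mono hsub) fun t ht => hlift t (hsub ht)

end LocallyIsometric

lemma ContinuousOn.exists_extension_Icc_of_boundedVariationOn {X : Type*} [PseudoEMetricSpace X]
    [CompleteSpace X] {q : ℝ → X} {a b : ℝ} (hq : ContinuousOn q (Ico a b))
    (hbv : BoundedVariationOn q (Ico a b)) :
    ∃ qbar : ℝ → X, ContinuousOn qbar (Icc a b) ∧ EqOn qbar q (Ico a b) := by
  obtain ⟨l, hl⟩ := hbv.exists_tendsto_left b
  rw [inter_eq_left.2 Ico_subset_Iio_self] at hl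
  classical
  refine ⟨update q b l, continuousOn_update_iff.2 ?_, fun t ht => update_of_ne ht.2.ne _ _⟩
  rw [Icc_sdiff_right]
  exact ⟨hq, fun _ => hl⟩

theorem stmt18_general {X Y : Type*} [MetricSpace X] [CompleteSpace X] [MetricSpace Y]
    (f : X → Y)
    (hloc : ∀ x : X, ∃ U ∈ nhds x, IsOpen (f '' U) ∧
      ∀ u ∈ U, ∀ w ∈ U, dist (f u) (f w) = dist u w)
    (p : ℝ → Y)
    (hrect : eVariationOn p (Set.Icc 0 1) ≠ ⊤)
    {ε : ℝ} (hε1 : ε ≤ 1)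
    (q : ℝ → X) (hq : ContinuousOn q (Set.Ico 0 ε))
    (hlift : ∀ t ∈ Set.Ico (0:ℝ) ε, f (q t) = p t) :
    (∀ t ∈ Set.Ico (0:ℝ) ε, eVariationOn q (Set.Icc 0 t) ≤ eVariationOn p (Set.Icc 0 t)) ∧
      ∃ qbar : ℝ → X, ContinuousOn qbar (Set.Icc 0 ε) ∧
        ∀ t ∈ Set.Ico (0:ℝ) ε, qbar t = q t := by
  have hf : LocallyIsometric f := fun x => (hloc x).imp fun _ ⟨hU, _, hiso⟩ => ⟨hU, hiso⟩
  refine ⟨fun t ht => hf.eVariationOn_lift_le (hq.mono (Icc_subset_Ico_right ht.2))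
    fun u hu => hlift u ⟨hu.1, hu.2.trans_lt ht.2⟩, ?_⟩
  refine hq.exists_extension_Icc_of_boundedVariationOn (ne_top_of_le_ne_top hrect ?_)
  calc eVariationOn q (Ico 0 ε) ≤ eVariationOn p (Ico 0 ε) := hf.eVariationOn_lift_le hq hlift
    _ ≤ eVariationOn p (Icc 0 1) :=
      eVariationOn.mono p (Ico_subset_Icc_self.trans (Icc_subset_Icc_right hε1))

/-- For a local isometry `f` from a complete length space, a lift `q` on `[0, ε)` of a
rectifiable path `p` satisfies `length(q|[0,t]) ≤ length(p|[0,t])` and extends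
continuously to `[0, ε]`. -/
theorem stmt18 {X Y : Type*} [MetricSpace X] [CompleteSpace X] [MetricSpace Y]
    (hlen : ∀ x y : X, ∀ δ > (0 : ℝ), ∃ z : X,
      dist x z ≤ dist x y / 2 + δ ∧ dist z y ≤ dist x y / 2 + δ)
    (f : X → Y)
    (hloc : ∀ x : X, ∃ U ∈ nhds x, IsOpen (f '' U) ∧
      ∀ u ∈ U, ∀ w ∈ U, dist (f u) (f w) = dist u w)
    (p : ℝ → Y) (hp : ContinuousOn p (Set.Icc 0 1))
    (hrect : eVariationOn p (Set.Icc 0 1) ≠ ⊤)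
    {ε : ℝ} (hε : 0 < ε) (hε1 : ε ≤ 1)
    (q : ℝ → X) (hq : ContinuousOn q (Set.Ico 0 ε))
    (hlift : ∀ t ∈ Set.Ico (0:ℝ) ε, f (q t) = p t) :
    (∀ t ∈ Set.Ico (0:ℝ) ε, eVariationOn q (Set.Icc 0 t) ≤ eVariationOn p (Set.Icc 0 t)) ∧
      ∃ qbar : ℝ → X, ContinuousOn qbar (Set.Icc 0 ε) ∧
        ∀ t ∈ Set.Ico (0:ℝ) ε, qbar t = q t :=
  stmt18_general f hloc p hrect hε1 q hq hlift
end
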